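/- Let f : A ⟶ B be a chain map of ℤ-indexed cochain complexes over an additive category. Then f is a homotopy equivalence if and only if the mapping cone Cone(f) is contractible. -/

import Mathlib

/-!
When `C` has no zero object, its homotopy category carries no triangulated structure. The
additive Yoneda embedding `C ⥤ (Cᵒᵖ ⥤ AddCommGrpCat)` lands in an abelian category, commutes
with mapping cones and stays fully faithful on homotopy categories. There
`A ⟶ B ⟶ Cone(f) ⟶ A[1]` is distinguished, so `f` is an isomorphism in the homotopy category,
i.e. a homotopy equivalence, exactly when `Cone(f)` is a zero object there, i.e. contractible.
-/

open CategoryTheory CategoryTheory.Limits CochainComplex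

instance preadditiveYoneda_additive {C : Type*} [Category C] [Preadditive C] :
    (preadditiveYoneda : C ⥤ Cᵒᵖ ⥤ AddCommGrpCat).Additive where
  map_add {_ _ f g} := by
    ext Z x
    exact Preadditive.comp_add _ _ _ x f g

namespace HomologicalComplex

variable {C : Type*} [Category C] [Preadditive C] {ι : Type*} {c : ComplexShape ι}

lemma exists_homotopy_inverse_iff_isIso_quotient_map {K L : HomologicalComplex C c}
    (f : K ⟶ L) :
    (∃ g : L ⟶ K, Nonempty (Homotopy (f ≫ g) (𝟙 K)) ∧ Nonempty (Homotopy (g ≫ f) (𝟙 L))) ↔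
      IsIso ((HomotopyCategory.quotient C c).map f) := by
  rw [isIso_quotient_map_iff_homotopyEquivalences]
  constructor
  · rintro ⟨g, ⟨h₁⟩, ⟨h₂⟩⟩
    exact ⟨⟨f, g, h₁, h₂⟩, rfl⟩
  · rintro ⟨e, rfl⟩
    exact ⟨e.inv, ⟨e.homotopyHomInvId⟩, ⟨e.homotopyInvHomId⟩⟩

variable {D : Type*} [Category D] [Preadditive D] (F : C ⥤ D) [F.Additive] [F.Full] [F.Faithful]

lemma isIso_quotient_map_mapHomologicalComplex_iff {K L : HomologicalComplex C c} (f : K ⟶ L) :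
    IsIso ((HomotopyCategory.quotient D c).map ((F.mapHomologicalComplex c).map f)) ↔
      IsIso ((HomotopyCategory.quotient C c).map f) :=
  isIso_iff_of_reflects_iso ((HomotopyCategory.quotient C c).map f) (F.mapHomotopyCategory c)

end HomologicalComplex

namespace CochainComplex

variable {C : Type*} [Category C] [Preadditive C] [HasBinaryBiproducts C]

lemma isIso_quotient_map_iff_isZero_mappingCone [HasZeroObject C] {A B : CochainComplex C ℤ}
    (f : A ⟶ B) :
    IsIso ((HomotopyCategory.quotient C _).map f) ↔
      IsZero ((HomotopyCategory.quotient C _).obj (mappingCone f)) :=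
  (Pretriangulated.Triangle.isZero₃_iff_isIso₁ _
    (HomotopyCategory.mappingCone_triangleh_distinguished f)).symm

lemma isZero_quotient_mappingCone_mapHomologicalComplex_iff {D : Type*} [Category D]
    [Preadditive D] [HasBinaryBiproducts D] (F : C ⥤ D) [F.Additive] [F.Full] [F.Faithful]
    {A B : CochainComplex C ℤ} (f : A ⟶ B) :
    IsZero ((HomotopyCategory.quotient D _).obj
        (mappingCone ((F.mapHomologicalComplex _).map f))) ↔
      IsZero ((HomotopyCategory.quotient C _).obj (mappingCone f)) := by
  rw [← ((HomotopyCategory.quotient D _).mapIso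
    (mappingCone.mapHomologicalComplexIso f F)).isZero_iff]
  exact ⟨IsZero.of_full_of_faithful_of_isZero (F.mapHomotopyCategory _) _,
    (F.mapHomotopyCategory _).map_isZero⟩

end CochainComplex

theorem mappingCone_contractible_iff_homotopyEquiv
    {C : Type*} [Category C] [Preadditive C] [HasBinaryBiproducts C]
    {A B : CochainComplex C ℤ} (f : A ⟶ B) :
    (∃ g : B ⟶ A, Nonempty (Homotopy (f ≫ g) (𝟙 A)) ∧ Nonempty (Homotopy (g ≫ f) (𝟙 B))) ↔
      Nonempty (Homotopy (𝟙 (mappingCone f)) 0) := by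
  let F : C ⥤ Cᵒᵖ ⥤ AddCommGrpCat := preadditiveYoneda
  rw [HomologicalComplex.exists_homotopy_inverse_iff_isIso_quotient_map,
    ← HomologicalComplex.isIso_quotient_map_mapHomologicalComplex_iff F,
    isIso_quotient_map_iff_isZero_mappingCone,
    isZero_quotient_mappingCone_mapHomologicalComplex_iff F,
    HomotopyCategory.isZero_quotient_obj_iff]
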